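/- arXiv:1408.4962 — 2 statements merged into one kernel-verified Lean document; each statement's English description precedes it below -/
import Mathlib

section
/- For a stationary random field Y on Ĝ, and all N ∈ ℕ, π₁,…,π_N ∈ Ĝ, c₁,…,c_N ∈ ℂ: ∑_{m,n=1}^{N} c_m conj(c_n) C_Y(π_m ⊗ π_n*) = E(|∑_{n=1}^N c_n Y_{π_n}|²), where C_Y denotes the decomposable extension of the covariance to finite-dimensional representations. -/
open Matrix Kronecker ComplexConjugate
open scoped Classical ComplexOrder

noncomputable section

universe u

variable (G : Type u) [Group G] [TopologicalSpace G]

/-- A continuous finite-dimensional unitary representation of `G`,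
realised as a family of unitary matrices. -/
structure CRep where
  ι : Type
  [fin : Fintype ι]
  [dec : DecidableEq ι]
  ρ : G → Matrix ι ι ℂ
  map_one : ρ 1 = 1
  map_mul : ∀ g h : G, ρ (g * h) = ρ g * ρ h
  unitary : ∀ g : G, ρ g ∈ Matrix.unitaryGroup ι ℂ
  cont : Continuous ρ

namespace CRep

attribute [instance] CRep.fin CRep.dec

variable {G}

/-- The character of a representation. -/
def char (π : CRep G) (g : G) : ℂ := (π.ρ g).trace

/-- The trivial representation. -/
def trivialRep : CRep G where
  ι := Unit
  ρ := fun _ => 1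
  map_one := rfl
  map_mul := by intros; simp
  unitary := fun _ => one_mem _
  cont := continuous_const

/-- The conjugate (contragredient) representation. -/
def conjRep (π : CRep G) : CRep G where
  ι := π.ι
  ρ := fun g => (π.ρ g).map (starRingEnd ℂ)
  map_one := by
    rw [π.map_one]
    exact Matrix.map_one _ (map_zero _) (_root_.map_one _)
  map_mul := by
    intro g h
    rw [π.map_mul, Matrix.map_mul]
  unitary := by
    intro g
    have h := π.unitary g
    rw [Matrix.mem_unitaryGroup_iff] at h ⊢
    have hs : star ((π.ρ g).map (starRingEnd ℂ)) = (π.ρ g)ᵀ := by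
      ext i j
      simp [Matrix.conjTranspose_apply]
    calc (π.ρ g).map (starRingEnd ℂ) * star ((π.ρ g).map (starRingEnd ℂ))
        = (π.ρ g).map (starRingEnd ℂ) * (π.ρ g)ᵀ := by rw [hs]
      _ = (π.ρ g * star (π.ρ g)).map (starRingEnd ℂ) := by
          rw [Matrix.map_mul]
          congr 1
          ext i j
          simp [Matrix.conjTranspose_apply]
      _ = 1 := by rw [h]; exact Matrix.map_one _ (map_zero _) (_root_.map_one _)
  cont := π.cont.matrix_map Complex.continuous_conj

/-- The tensor product of two representations (Kronecker product of matrices). -/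
def tensor (π₁ π₂ : CRep G) : CRep G where
  ι := π₁.ι × π₂.ι
  ρ := fun g => π₁.ρ g ⊗ₖ π₂.ρ g
  map_one := by
    rw [π₁.map_one, π₂.map_one]; exact Matrix.one_kronecker_one
  map_mul := by
    intro g h
    rw [π₁.map_mul, π₂.map_mul, Matrix.mul_kronecker_mul]
  unitary := by
    intro g
    have h₁ := π₁.unitary g
    have h₂ := π₂.unitary g
    rw [Matrix.mem_unitaryGroup_iff] at h₁ h₂ ⊢
    have hstar : star (π₁.ρ g ⊗ₖ π₂.ρ g) = star (π₁.ρ g) ⊗ₖ star (π₂.ρ g) := by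
      ext i j
      simp [Matrix.conjTranspose_apply, Matrix.kroneckerMap_apply]
    rw [hstar, ← Matrix.mul_kronecker_mul, h₁, h₂, Matrix.one_kronecker_one]
  cont := continuous_matrix fun i j =>
    (π₁.cont.matrix_elem i.1 j.1).mul (π₂.cont.matrix_elem i.2 j.2)

/-- Irreducibility: every matrix commuting with the representation is scalar (Schur). -/
def IsIrreducible (π : CRep G) : Prop :=
  ∀ A : Matrix π.ι π.ι ℂ, (∀ g, A * π.ρ g = π.ρ g * A) →
    ∃ c : ℂ, A = c • (1 : Matrix π.ι π.ι ℂ)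

/-- (Unitary) equivalence of representations. -/
def Equiv (π₁ π₂ : CRep G) : Prop :=
  ∃ (f : Matrix π₂.ι π₁.ι ℂ) (f' : Matrix π₁.ι π₂.ι ℂ),
    (∀ g, f * π₁.ρ g = π₂.ρ g * f) ∧ f * f' = 1 ∧ f' * f = 1

end CRep

open MeasureTheory

variable [IsTopologicalGroup G] [CompactSpace G] [MeasurableSpace G] [BorelSpace G]
variable {G}

/-- The multiplicity `M(σ, π) = ∫_G χ_σ(g⁻¹) χ_π(g) dg`. -/
def mult (μ : Measure G) (σ π : CRep G) : ℂ :=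
  ∫ g, σ.char g⁻¹ * π.char g ∂μ

variable (G) in
/-- A model of the unitary dual `Ĝ`: a complete irredundant family of
irreducible unitary representations, containing the trivial representation. -/
structure UnitaryDual where
  idx : Type
  rep : idx → CRep G
  irr : ∀ i, (rep i).IsIrreducible
  complete : ∀ π : CRep G, π.IsIrreducible → ∃ i, CRep.Equiv π (rep i)
  distinct : ∀ i j, CRep.Equiv (rep i) (rep j) → i = j
  e : idx
  he : CRep.Equiv (rep e) CRep.trivialRep

/-- The covariance `E(Y_σ * conj(Y_τ))`. -/
def cov {Ω : Type*} [MeasurableSpace Ω] (P : Measure Ω)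
    (Y : CRep G → Ω → ℂ) (σ τ : CRep G) : ℂ :=
  ∫ ω, Y σ ω * (starRingEnd ℂ) (Y τ ω) ∂P

/-- Wide-sense stationarity of a random field on the unitary dual. -/
def Stationary {Ω : Type*} [MeasurableSpace Ω] (P : Measure Ω)
    (D : UnitaryDual G) (Y : CRep G → Ω → ℂ) : Prop :=
  ∀ i j : D.idx,
    cov P Y (D.rep i) (D.rep j)
      = cov P Y ((D.rep i).tensor (D.rep j).conjRep) (D.rep D.e)

/-- Decomposability of a random field over the dual. -/
def Decomposable (μ : Measure G) {Ω : Type*} [MeasurableSpace Ω] (P : Measure Ω)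
    (D : UnitaryDual G) (Y : CRep G → Ω → ℂ) : Prop :=
  ∀ σ : CRep G, ∀ᵐ ω ∂P,
    Y σ ω = ∑' i : D.idx, mult μ σ (D.rep i) * Y (D.rep i) ω

section L2

variable {Ω ι : Type*} [MeasurableSpace Ω] {P : Measure Ω}

theorem MeasureTheory.MemLp.integrable_mul_conj {f g : Ω → ℂ} (hf : MemLp f 2 P)
    (hg : MemLp g 2 P) : Integrable (fun ω => f ω * conj (g ω)) P :=
  hf.integrable_mul hg.star

theorem integral_tsum_mul_of_finite_support {a : ι → ℂ} (ha : (Function.support a).Finite)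
    {g : ι → Ω → ℂ} (hg : ∀ i, Integrable (g i) P) :
    ∫ ω, ∑' i, a i * g i ω ∂P = ∑' i, a i * ∫ ω, g i ω ∂P := by
  have tsum_eq {b : ι → ℂ} (hb : ∀ i, a i = 0 → b i = 0) : ∑' i, b i = ∑ i ∈ ha.toFinset, b i :=
    tsum_eq_sum fun i hi => hb i (by simpa using hi)
  calc ∫ ω, ∑' i, a i * g i ω ∂P = ∫ ω, ∑ i ∈ ha.toFinset, a i * g i ω ∂P :=
        integral_congr_ae (.of_forall fun ω => tsum_eq (by simp_all))
    _ = ∑ i ∈ ha.toFinset, a i * ∫ ω, g i ω ∂P := by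
        rw [integral_finsetSum _ fun i _ => (hg i).const_mul (a i)]
        simp only [integral_const_mul]
    _ = ∑' i, a i * ∫ ω, g i ω ∂P := (tsum_eq (by simp_all)).symm

theorem integral_mul_conj_of_ae_eq_tsum {f h : Ω → ℂ} {a : ι → ℂ} {g : ι → Ω → ℂ}
    (hfg : ∀ᵐ ω ∂P, f ω = ∑' i, a i * g i ω) (ha : (Function.support a).Finite)
    (hg : ∀ i, MemLp (g i) 2 P) (hh : MemLp h 2 P) :
    ∫ ω, f ω * conj (h ω) ∂P = ∑' i, a i * ∫ ω, g i ω * conj (h ω) ∂P := by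
  rw [← integral_tsum_mul_of_finite_support ha fun i => (hg i).integrable_mul_conj hh]
  refine integral_congr_ae ?_
  filter_upwards [hfg] with ω hω
  simp only [hω, ← mul_assoc, tsum_mul_right]

theorem integral_norm_sum_sq_eq [Fintype ι] {f : ι → Ω → ℂ} (hf : ∀ i, MemLp (f i) 2 P)
    (c : ι → ℂ) :
    ((∫ ω, ‖∑ n, c n * f n ω‖ ^ 2 ∂P : ℝ) : ℂ)
      = ∑ m, ∑ n, c m * conj (c n) * ∫ ω, f m ω * conj (f n ω) ∂P := by
  have hint (m n : ι) := ((hf m).integrable_mul_conj (hf n)).const_mul (c m * conj (c n))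
  calc ((∫ ω, ‖∑ n, c n * f n ω‖ ^ 2 ∂P : ℝ) : ℂ)
      = ∫ ω, (∑ m, c m * f m ω) * conj (∑ n, c n * f n ω) ∂P := by
        rw [← integral_complex_ofReal]
        simp only [Complex.ofReal_pow, Complex.mul_conj']
    _ = ∫ ω, ∑ m, ∑ n, c m * conj (c n) * (f m ω * conj (f n ω)) ∂P := by
        congr 1; ext ω
        simp only [map_sum, map_mul, Finset.sum_mul_sum]
        exact Finset.sum_congr rfl fun m _ => Finset.sum_congr rfl fun n _ => by ring
    _ = ∑ m, ∑ n, c m * conj (c n) * ∫ ω, f m ω * conj (f n ω) ∂P := by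
        rw [integral_finsetSum _ fun m _ => integrable_finsetSum _ fun n _ => hint m n]
        simp only [integral_finsetSum _ fun n _ => hint _ n, integral_const_mul]

end L2

theorem stmt4_general (μ : Measure G)
    (D : UnitaryDual G) {Ω : Type*} [MeasurableSpace Ω] (P : Measure Ω)
    (Y : CRep G → Ω → ℂ)
    (hL2 : ∀ σ : CRep G, MemLp (Y σ) 2 P)
    (hdec : Decomposable μ P D Y) (hstat : Stationary P D Y)
    (hfin : ∀ σ : CRep G, {i : D.idx | mult μ σ (D.rep i) ≠ 0}.Finite)
    (N : ℕ) (π : Fin N → D.idx) (c : Fin N → ℂ) :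
    ∑ m : Fin N, ∑ n : Fin N, c m * (starRingEnd ℂ) (c n) *
        (∑' i : D.idx, mult μ ((D.rep (π m)).tensor (D.rep (π n)).conjRep) (D.rep i) *
          cov P Y (D.rep i) (D.rep D.e))
      = ((∫ ω, ‖∑ n : Fin N, c n * Y (D.rep (π n)) ω‖ ^ 2 ∂P : ℝ) : ℂ) := by
  have decomposed_cov (m n : Fin N) :
      ∑' i, mult μ ((D.rep (π m)).tensor (D.rep (π n)).conjRep) (D.rep i) *
          cov P Y (D.rep i) (D.rep D.e)
        = cov P Y (D.rep (π m)) (D.rep (π n)) := by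
    rw [hstat]
    exact (integral_mul_conj_of_ae_eq_tsum (hdec _) (hfin _) (fun i => hL2 _) (hL2 _)).symm
  simp only [decomposed_cov]
  exact (integral_norm_sum_sq_eq (fun n => hL2 (D.rep (π n))) c).symm

/-- `∑ c_m conj(c_n) C_Y(π_m ⊗ π_n*) = E(|∑ c_n Y_(π_n)|²)` for a stationary field,
where `C_Y` is extended decomposably to finite-dimensional representations. -/
theorem stmt4 (μ : Measure G) [μ.IsHaarMeasure] [IsProbabilityMeasure μ]
    (D : UnitaryDual G) {Ω : Type*} [MeasurableSpace Ω] (P : Measure Ω)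
    [IsProbabilityMeasure P] (Y : CRep G → Ω → ℂ)
    (hL2 : ∀ σ : CRep G, MemLp (Y σ) 2 P)
    (hdec : Decomposable μ P D Y) (hstat : Stationary P D Y)
    (hfin : ∀ σ : CRep G, {i : D.idx | mult μ σ (D.rep i) ≠ 0}.Finite)
    (N : ℕ) (π : Fin N → D.idx) (c : Fin N → ℂ) :
    ∑ m : Fin N, ∑ n : Fin N, c m * (starRingEnd ℂ) (c n) *
        (∑' i : D.idx, mult μ ((D.rep (π m)).tensor (D.rep (π n)).conjRep) (D.rep i) *
          cov P Y (D.rep i) (D.rep D.e))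
      = ((∫ ω, ‖∑ n : Fin N, c n * Y (D.rep (π n)) ω‖ ^ 2 ∂P : ℝ) : ℂ) :=
  stmt4_general μ D P Y hL2 hdec hstat hfin N π c
end
end

section
/- A stationary random field on the unitary dual Ĝ of a compact group is stationary in the hypergroup sense: for all π₁, π₂ ∈ Ĝ, C(π₁, π₂) = ∑_{π ∈ Ĝ} M(π₁ ⊗ π₂*, π) · C(π, ε), where C(a,b) = E(Y_a conj(Y_b)). -/
open Matrix Kronecker ComplexConjugate
open scoped Classical ComplexOrder

noncomputable section

universe u

variable (G : Type u) [Group G] [TopologicalSpace G]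

open MeasureTheory

variable [IsTopologicalGroup G] [CompactSpace G] [MeasurableSpace G] [BorelSpace G]
variable {G}

namespace MeasureTheory

variable {Ω 𝕜 : Type*} [MeasurableSpace Ω] {P : Measure Ω} [RCLike 𝕜]

lemma MemLp.integrable_mul_conj_s15 {f g : Ω → 𝕜} (hf : MemLp f 2 P) (hg : MemLp g 2 P) :
    Integrable (fun ω => f ω * conj (g ω)) P := by
  refine (L2.integrable_inner (𝕜 := 𝕜) (hg.toLp g) (hf.toLp f)).congr ?_
  filter_upwards [hf.coeFn_toLp, hg.coeFn_toLp] with ω hfω hgω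
  simp only [RCLike.inner_apply, hfω, hgω]

lemma integral_tsum_const_mul_of_finite_support {ι : Type*} {c : ι → 𝕜}
    (hc : (Function.support c).Finite) {F : ι → Ω → 𝕜} (hF : ∀ k, Integrable (F k) P) :
    ∫ ω, ∑' k, c k * F k ω ∂P = ∑' k, c k * ∫ ω, F k ω ∂P := by
  have hsum : ∀ a : ι → 𝕜, ∑' k, c k * a k = ∑ k ∈ hc.toFinset, c k * a k := fun a =>
    tsum_eq_sum fun k hk => by simp_all
  simp_rw [hsum]
  rw [integral_finsetSum _ fun k _ => (hF k).const_mul (c k)]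
  simp_rw [integral_const_mul]

end MeasureTheory

open MeasureTheory

lemma cov_eq_tsum_of_ae_eq_tsum {H : Type*} [Group H] [TopologicalSpace H]
    {Ω : Type*} [MeasurableSpace Ω] {P : Measure Ω}
    {Y : CRep H → Ω → ℂ} {ι : Type*} {rep : ι → CRep H} {c : ι → ℂ} {σ τ : CRep H}
    (hc : (Function.support c).Finite) (hrep : ∀ k, MemLp (Y (rep k)) 2 P)
    (hτ : MemLp (Y τ) 2 P) (hσ : ∀ᵐ ω ∂P, Y σ ω = ∑' k, c k * Y (rep k) ω) :
    cov P Y σ τ = ∑' k, c k * cov P Y (rep k) τ := by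
  have hexpand : ∀ᵐ ω ∂P, Y σ ω * conj (Y τ ω) = ∑' k, c k * (Y (rep k) ω * conj (Y τ ω)) := by
    filter_upwards [hσ] with ω hω
    simp only [hω, ← tsum_mul_right, mul_assoc]
  rw [cov, integral_congr_ae hexpand,
    integral_tsum_const_mul_of_finite_support hc fun k => (hrep k).integrable_mul_conj_s15 hτ]
  rfl

theorem stmt15_general (μ : Measure G)
    (D : UnitaryDual G) {Ω : Type*} [MeasurableSpace Ω] (P : Measure Ω)
    (Y : CRep G → Ω → ℂ)
    (hL2 : ∀ σ : CRep G, MemLp (Y σ) 2 P)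
    (hdec : Decomposable μ P D Y) (hstat : Stationary P D Y)
    (hfin : ∀ σ : CRep G, {i : D.idx | mult μ σ (D.rep i) ≠ 0}.Finite) :
    ∀ i j : D.idx, cov P Y (D.rep i) (D.rep j)
      = ∑' k : D.idx, mult μ ((D.rep i).tensor (D.rep j).conjRep) (D.rep k) *
          cov P Y (D.rep k) (D.rep D.e) := by
  intro i j
  rw [hstat i j]
  exact cov_eq_tsum_of_ae_eq_tsum (hfin _) (fun k => hL2 _) (hL2 _) (hdec _)

/-- A stationary random field on `Ĝ` is stationary in the hypergroup sense:
`C(π₁,π₂) = ∑_π M(π₁⊗π₂*, π) C(π, ε)`. -/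
theorem stmt15 (μ : Measure G) [μ.IsHaarMeasure] [IsProbabilityMeasure μ]
    (D : UnitaryDual G) {Ω : Type*} [MeasurableSpace Ω] (P : Measure Ω)
    [IsProbabilityMeasure P] (Y : CRep G → Ω → ℂ)
    (hL2 : ∀ σ : CRep G, MemLp (Y σ) 2 P)
    (hdec : Decomposable μ P D Y) (hstat : Stationary P D Y)
    (hfin : ∀ σ : CRep G, {i : D.idx | mult μ σ (D.rep i) ≠ 0}.Finite) :
    ∀ i j : D.idx, cov P Y (D.rep i) (D.rep j)
      = ∑' k : D.idx, mult μ ((D.rep i).tensor (D.rep j).conjRep) (D.rep k) *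
          cov P Y (D.rep k) (D.rep D.e) :=
  stmt15_general μ D P Y hL2 hdec hstat hfin
end
end
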